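/- arXiv:2008.10549 — 7 statements merged into one kernel-verified Lean document; each statement's English description precedes it below -/
import Mathlib

section
/- There is a universal constant a > 0 such that the following holds. Let X be a finite multiset of size n over a finite entity set E with |E| ≥ 2, and suppose X is η-balanced, i.e. prob(e) = freq(e)/n ≥ η for every e ∈ E. Let W = (v₁,…,v_m) be drawn i.i.d. uniformly from X. Define p̂(e) = |{i : v_i = e}|/m for every entity e occurring in W, and p̂(e) = min_{w ∈ W} p̂(w) for entities not occurring in W; let P be the probability distribution on E with P(e) proportional to prob(e)/p̂(e). For every ε, δ ∈ (0,1), if m ≥ (a/(ε²η²))·(log|E|·log(log|E|/(εη)) + log(1/δ)), then with probability at least 1 − δ over the choice of W, the total variation distance between P and the uniform distribution on E is at most ε. -/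
open scoped BigOperators Classical

/-- The frequency estimates of Algorithm 4 (probability estimates for balanced datasets):
for an entity `e` occurring in the sample `W`, `pHat W e` is its empirical frequency in
`W`; for an entity not occurring in `W`, it is the minimum empirical frequency over the
entities occurring in `W`. -/
noncomputable def pHat {E : Type*} [DecidableEq E] {m : ℕ} (W : Fin m → E) (e : E) : ℝ :=
  if ∃ i, W i = e then
    ((Finset.univ.filter fun i => W i = e).card : ℝ) / m
  else
    sInf {x : ℝ | ∃ i : Fin m,
      x = ((Finset.univ.filter fun i' => W i' = W i).card : ℝ) / m}

/-!
Hoeffding's inequality for the indicator of each entity, combined with a union bound over `E`,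
shows that with probability at least `1 - 2|E| exp(-2 m t²)` every empirical frequency is within
`t = εη/3` of the true one. On that event every entity occurs in the sample, so `pHat` is the
empirical frequency, and since `prob e ≥ η` it is within a factor `1 ± ε/3` of `prob e`. The
unnormalised weights `prob e / pHat e` then lie in `[1/(1+ε/3), 1/(1-ε/3)]`, and weights confined
to an interval `[A, B]` normalise to a distribution within total variation `(B - A)/(2A)` of the
uniform one, here `ε/(3 - ε) ≤ ε`. The constant `a = 36` makes `2|E| exp(-2 m t²) ≤ δ`.
-/

open MeasureTheory ProbabilityTheory Finset

noncomputable def empiricalFreq {E : Type*} [DecidableEq E] {m : ℕ} (W : Fin m → E) (e : E) :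
    ℝ :=
  ((univ.filter fun i => W i = e).card : ℝ) / m

lemma natCast_mul_empiricalFreq {E : Type*} [DecidableEq E] {m : ℕ} (W : Fin m → E) (e : E) :
    (m : ℝ) * empiricalFreq W e = ∑ i, ({e} : Set E).indicator 1 (W i) := by
  rcases Nat.eq_zero_or_pos m with rfl | hm
  · simp
  · rw [empiricalFreq, mul_div_cancel₀ _ (by positivity), Finset.card_filter]
    simp [Set.indicator_apply]

lemma pHat_eq_empiricalFreq {E : Type*} [DecidableEq E] {m : ℕ} {W : Fin m → E} {e : E}
    (h : 0 < empiricalFreq W e) : pHat W e = empiricalFreq W e := by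
  obtain ⟨i, hi⟩ : (univ.filter fun i => W i = e).Nonempty := by
    rw [← Finset.card_pos]
    by_contra h0
    simp_all [empiricalFreq]
  rw [pHat, if_pos ⟨i, (Finset.mem_filter.1 hi).2⟩, empiricalFreq]

lemma half_sum_abs_div_sum_sub_inv_card_le {E : Type*} [Fintype E] [Nonempty E] {r : E → ℝ}
    {A B : ℝ} (hA : 0 < A) (hr : ∀ e, r e ∈ Set.Icc A B) :
    1 / 2 * ∑ e, |r e / ∑ e', r e' - 1 / Fintype.card E| ≤ (B - A) / (2 * A) := by
  set K : ℝ := (Fintype.card E : ℝ) with hKdef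
  have hK : 0 < K := by positivity
  have hB : 0 < B := hA.trans_le ((hr (Classical.arbitrary E)).1.trans (hr _).2)
  have hS : K * A ≤ ∑ e', r e' ∧ ∑ e', r e' ≤ K * B := by
    constructor
    · simpa [K] using Finset.sum_le_sum fun e (_ : e ∈ univ) => (hr e).1
    · simpa [K] using Finset.sum_le_sum fun e (_ : e ∈ univ) => (hr e).2
  have hS0 : 0 < ∑ e', r e' := lt_of_lt_of_le (by positivity) hS.1
  have hterm (e : E) : |r e / ∑ e', r e' - 1 / K| ≤ (B - A) / (K * A) := by
    rw [abs_le]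
    constructor
    · calc -((B - A) / (K * A)) ≤ A / (K * B) - 1 / K := by
            rw [div_sub_div _ _ (by positivity) hK.ne', neg_div',
              div_le_div_iff₀ (by positivity) (by positivity)]
            nlinarith
        _ ≤ r e / ∑ e', r e' - 1 / K := by
            gcongr 1
            exact div_le_div₀ (hA.trans_le (hr e).1).le (hr e).1 hS0 hS.2
    · calc r e / ∑ e', r e' - 1 / K ≤ B / (K * A) - 1 / K := by
            gcongr 1
            exact div_le_div₀ hB.le (hr e).2 (by positivity) hS.1
        _ = (B - A) / (K * A) := by field_simp
  calc 1 / 2 * ∑ e, |r e / ∑ e', r e' - 1 / K| ≤ 1 / 2 * ∑ _e : E, (B - A) / (K * A) := by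
        gcongr with e; exact hterm e
    _ = (B - A) / (2 * A) := by
        rw [sum_const, card_univ, nsmul_eq_mul, ← hKdef]
        field_simp

lemma half_sum_abs_normalize_div_pHat_sub_le {E : Type*} [Fintype E] [DecidableEq E] [Nonempty E]
    {m : ℕ} {W : Fin m → E} {q : E → ℝ} {η ε : ℝ} (hη : 0 < η) (hq : ∀ e, η ≤ q e)
    (hε0 : 0 ≤ ε) (hε1 : ε ≤ 1) (hW : ∀ e, |empiricalFreq W e - q e| ≤ ε * η / 3) :
    1 / 2 * ∑ e, |q e / pHat W e / ∑ e', q e' / pHat W e' - 1 / Fintype.card E| ≤ ε := by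
  have hrel (e : E) : |empiricalFreq W e - q e| ≤ ε / 3 * q e :=
    (hW e).trans (by nlinarith [hq e])
  have hq0 (e : E) : 0 < q e := hη.trans_le (hq e)
  have hemp (e : E) : 0 < empiricalFreq W e := by
    nlinarith [(abs_le.1 (hrel e)).1, hq0 e]
  simp only [pHat_eq_empiricalFreq (hemp _)]
  refine (half_sum_abs_div_sum_sub_inv_card_le (A := 1 / (1 + ε / 3)) (B := 1 / (1 - ε / 3))
    (by positivity) fun e => ⟨?_, ?_⟩).trans ?_
  · rw [div_le_div_iff₀ (by positivity) (hemp e)]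
    linarith [(abs_le.1 (hrel e)).2]
  · rw [div_le_div_iff₀ (hemp e) (by linarith)]
    linarith [(abs_le.1 (hrel e)).1]
  · have : 0 < 3 - ε := by linarith
    field_simp
    nlinarith

section Sampling

variable {E : Type*} [Fintype E] [MeasurableSpace E] [MeasurableSingletonClass E]

lemma exists_isProbabilityMeasure_measureReal_singleton {q : E → ℝ} (hq0 : ∀ e, 0 ≤ q e)
    (hq1 : ∑ e, q e = 1) : ∃ ν : Measure E, IsProbabilityMeasure ν ∧ ∀ e, ν.real {e} = q e := by
  have hsum : ∑ e, ENNReal.ofReal (q e) = 1 := by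
    rw [← ENNReal.ofReal_sum_of_nonneg fun e _ => hq0 e, hq1, ENNReal.ofReal_one]
  refine ⟨(PMF.ofFintype _ hsum).toMeasure, inferInstance, fun e => ?_⟩
  rw [measureReal_def, PMF.toMeasure_apply_singleton _ _ (measurableSet_singleton e),
    PMF.ofFintype_apply, ENNReal.toReal_ofReal (hq0 e)]

lemma measureReal_pi_setOf_eq_sum_prod {ι : Type*} [Fintype ι] [DecidableEq ι] (ν : Measure E)
    [SigmaFinite ν] {q : E → ℝ} (hνq : ∀ e, ν.real {e} = q e) (P : (ι → E) → Prop)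
    [DecidablePred P] :
    (Measure.pi fun _ : ι => ν).real {W | P W} = ∑ W ∈ univ.filter P, ∏ i, q (W i) := by
  rw [← Finset.coe_filter_univ, ← sum_measureReal_singleton]
  simp [measureReal_def, ENNReal.toReal_prod, ← hνq]

end Sampling

lemma measureReal_pi_sum_ge_le_of_mem_Icc {Ω ι : Type*} [MeasurableSpace Ω] [Fintype ι]
    (ν : Measure Ω) [IsProbabilityMeasure ν] {g : Ω → ℝ} (hg : Measurable g) {a b : ℝ}
    (hab : ∀ x, g x ∈ Set.Icc a b) (hmean : ∫ x, g x ∂ν = 0) {t : ℝ} (ht : 0 ≤ t) :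
    (Measure.pi fun _ : ι => ν).real {ω | t ≤ ∑ i, g (ω i)} ≤
      Real.exp (-2 * t ^ 2 / (Fintype.card ι * (b - a) ^ 2)) := by
  have hsubG (i : ι) : HasSubgaussianMGF (fun ω : ι → Ω => g (ω i)) ((‖b - a‖₊ / 2) ^ 2)
      (Measure.pi fun _ => ν) := by
    refine hasSubgaussianMGF_of_mem_Icc_of_integral_eq_zero
      (hg.comp (measurable_pi_apply i)).aemeasurable (ae_of_all _ fun ω => hab (ω i)) ?_
    rw [← integral_map (measurable_pi_apply i).aemeasurable hg.aestronglyMeasurable,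
      (measurePreserving_eval _ i).map_eq, hmean]
  refine (HasSubgaussianMGF.measure_sum_ge_le_of_iIndepFun
    (iIndepFun_pi (X := fun _ => g) fun _ => hg.aemeasurable) (fun i _ => hsubG i) ht).trans_eq ?_
  congr 1
  push_cast
  rw [Real.norm_eq_abs, div_pow, sq_abs, Finset.sum_const, Finset.card_univ, nsmul_eq_mul]
  generalize (b - a) ^ 2 = s
  ring

section EmpiricalFreq

variable {E : Type*} [Fintype E] [DecidableEq E] [MeasurableSpace E] [MeasurableSingletonClass E]
  (ν : Measure E) [IsProbabilityMeasure ν] (m : ℕ)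

lemma measureReal_pi_lt_abs_empiricalFreq_sub_le (e : E) {t : ℝ} (ht : 0 ≤ t) :
    (Measure.pi fun _ : Fin m => ν).real {W | t < |empiricalFreq W e - ν.real {e}|} ≤
      2 * Real.exp (-2 * m * t ^ 2) := by
  set g : E → ℝ := fun x => ({e} : Set E).indicator 1 x - ν.real {e}
  have hg : Measurable g := .of_discrete
  have hbound (x : E) : g x ∈ Set.Icc (-ν.real {e}) (1 - ν.real {e}) := by
    simp only [g, Set.indicator_apply]
    split_ifs <;> simp
  have hmean : ∫ x, g x ∂ν = 0 := by
    rw [integral_sub .of_finite (integrable_const _),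
      integral_indicator_one (measurableSet_singleton e)]
    simp
  have hsum (W : Fin m → E) : ∑ i, g (W i) = m * (empiricalFreq W e - ν.real {e}) := by
    simp only [g, Finset.sum_sub_distrib, mul_sub, natCast_mul_empiricalFreq]
    simp
  have hsplit : {W : Fin m → E | t < |empiricalFreq W e - ν.real {e}|} ⊆
      {W | m * t ≤ ∑ i, g (W i)} ∪ {W | m * t ≤ ∑ i, (-g) (W i)} := by
    intro W hW
    simp only [Set.mem_ofPred_eq, Set.mem_union, Pi.neg_apply, Finset.sum_neg_distrib,
      hsum] at hW ⊢
    rcases lt_abs.1 hW with h | h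
    · exact Or.inl (by gcongr)
    · exact Or.inr (by rw [← mul_neg]; gcongr)
  have hmt : 0 ≤ (m : ℝ) * t := by positivity
  have hupper := measureReal_pi_sum_ge_le_of_mem_Icc (ι := Fin m) ν hg hbound hmean hmt
  have hlower := measureReal_pi_sum_ge_le_of_mem_Icc (ι := Fin m) ν hg.neg
    (a := ν.real {e} - 1) (b := ν.real {e})
    (fun x => ⟨by simp only [Pi.neg_apply]; linarith [(hbound x).2],
      by simp only [Pi.neg_apply]; linarith [(hbound x).1]⟩)
    (by rw [Pi.neg_def, integral_neg, hmean, neg_zero]) hmt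
  have hexponent : -2 * ((m : ℝ) * t) ^ 2 / m = -2 * m * t ^ 2 := by
    rcases eq_or_ne (m : ℝ) 0 with hm | hm
    · simp [hm]
    · field_simp
  simp only [Fintype.card_fin, sub_neg_eq_add, sub_add_cancel, sub_sub_cancel, one_pow, mul_one,
    hexponent] at hupper hlower
  calc _ ≤ _ := measureReal_mono hsplit
    _ ≤ _ := measureReal_union_le _ _
    _ ≤ _ := add_le_add hupper hlower
    _ = _ := by ring

lemma measureReal_pi_exists_lt_abs_empiricalFreq_sub_le {t : ℝ} (ht : 0 ≤ t) :
    (Measure.pi fun _ : Fin m => ν).real {W | ∃ e, t < |empiricalFreq W e - ν.real {e}|} ≤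
      2 * Fintype.card E * Real.exp (-2 * m * t ^ 2) := by
  rw [Set.ofPred_exists]
  refine (measureReal_iUnion_fintype_le _).trans ?_
  calc _ ≤ ∑ _e : E, 2 * Real.exp (-2 * m * t ^ 2) :=
        sum_le_sum fun e _ => measureReal_pi_lt_abs_empiricalFreq_sub_le ν m e ht
    _ = _ := by rw [sum_const, card_univ, nsmul_eq_mul]; ring

end EmpiricalFreq

lemma two_mul_mul_exp_le_of_le {K : ℕ} (hK : 2 ≤ K) {x δ : ℝ} (hx0 : 0 < x) (hx : x ≤ 1 / 2)
    (hδ0 : 0 < δ) (hδ1 : δ ≤ 1) {m : ℕ}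
    (hm : 36 / x ^ 2 * (Real.log K * Real.log (Real.log K / x) + Real.log (1 / δ)) ≤ m) :
    2 * K * Real.exp (-2 * m * (x / 3) ^ 2) ≤ δ := by
  set L := Real.log K
  set D := Real.log (1 / δ)
  have hK0 : (0 : ℝ) < K := by positivity
  have hL2 : Real.log 2 ≤ L := Real.log_le_log two_pos (by exact_mod_cast hK)
  have hL : 2 / 3 < L := by linarith [Real.log_two_gt_d9]
  have hD : 0 ≤ D := Real.log_nonneg (by rw [le_div_iff₀ hδ0]; linarith)
  have hLx : 4 / 3 ≤ L / x := by rw [le_div_iff₀ hx0]; nlinarith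
  have hlogLx : 1 / 4 ≤ Real.log (L / x) := by
    have := Real.one_sub_inv_le_log_of_pos (by positivity : 0 < L / x)
    have : (L / x)⁻¹ ≤ 3 / 4 := by rw [inv_le_comm₀ (by positivity) (by norm_num)]; linarith
    linarith
  have hexponent : Real.log 2 + L + D ≤ 2 * m * (x / 3) ^ 2 := by
    have h36 : 36 / x ^ 2 * (L * Real.log (L / x) + D) * (x ^ 2 / 18) ≤ m * (x ^ 2 / 18) := by
      gcongr
    have : 36 / x ^ 2 * (L * Real.log (L / x) + D) * (x ^ 2 / 18) =
        2 * (L * Real.log (L / x) + D) := by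
      field_simp
      norm_num
    linarith [mul_le_mul_of_nonneg_left hlogLx (by linarith : 0 ≤ L)]
  have hlog : Real.log 2 + L + D = Real.log (2 * K / δ) := by
    rw [Real.log_div (by positivity) hδ0.ne', Real.log_mul two_ne_zero hK0.ne']
    simp only [L, D, one_div, Real.log_inv]
    ring
  calc 2 * K * Real.exp (-2 * m * (x / 3) ^ 2)
      ≤ 2 * K * Real.exp (-Real.log (2 * K / δ)) := by gcongr; linarith
    _ = δ := by
      rw [Real.exp_neg, Real.exp_log (by positivity)]
      field_simp

/-- Sampling for balanced datasets (Theorem 3.1). There is a universal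
constant `a > 0` such that for every `η`-balanced dataset (given by `freq : E → ℕ` with
`∑ freq = n`), every `ε, δ ∈ (0,1)` and every sample size
`m ≥ (a/(ε²η²))·(log|E|·log(log|E|/(εη)) + log(1/δ))`: with probability at least `1 − δ`
over `m` i.i.d. uniform draws `W` from the dataset, the distribution `P` on `E` with
`P(e) ∝ prob(e)/pHat W e` is within total variation distance `ε` of the uniform
distribution on `E`. -/
theorem stmt_1 :
    ∃ a : ℝ, 0 < a ∧
      ∀ (E : Type) [Fintype E] [DecidableEq E],
      ∀ (freq : E → ℕ) (n : ℕ) (η ε δ : ℝ),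
        2 ≤ Fintype.card E →
        0 < n →
        (∑ e : E, freq e) = n →
        0 < η →
        (∀ e : E, η ≤ (freq e : ℝ) / n) →
        ε ∈ Set.Ioo (0:ℝ) 1 →
        δ ∈ Set.Ioo (0:ℝ) 1 →
        ∀ m : ℕ,
          (a / (ε ^ 2 * η ^ 2)) *
              (Real.log (Fintype.card E) *
                  Real.log (Real.log (Fintype.card E) / (ε * η)) +
                Real.log (1 / δ)) ≤ (m : ℝ) →
          1 - δ ≤
            ∑ W ∈ Finset.univ.filter (fun W : Fin m → E =>
                (1 / 2 : ℝ) * ∑ e : E,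
                    |((freq e : ℝ) / n / pHat W e) /
                        (∑ e' : E, (freq e' : ℝ) / n / pHat W e') -
                      1 / (Fintype.card E : ℝ)| ≤ ε),
              ∏ i, (freq (W i) : ℝ) / n := by
  refine ⟨36, by norm_num, fun E _ _ freq n η ε δ hK hn hfreq hη hbal hε hδ m hm => ?_⟩
  have hq0 (e : E) : 0 ≤ (freq e : ℝ) / n := by positivity
  have hq1 : ∑ e, (freq e : ℝ) / n = 1 := by
    rw [← Finset.sum_div, ← Nat.cast_sum, hfreq, div_self (by positivity)]
  have hηK : η * Fintype.card E ≤ 1 := by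
    simpa [hq1, mul_comm] using Finset.sum_le_sum fun e (_ : e ∈ univ) => hbal e
  have hεη : ε * η ≤ 1 / 2 := by
    have : (2 : ℝ) ≤ Fintype.card E := by exact_mod_cast hK
    nlinarith [hε.1, hε.2]
  have hεη0 : 0 < ε * η := mul_pos hε.1 hη
  have htail : 2 * Fintype.card E * Real.exp (-2 * m * (ε * η / 3) ^ 2) ≤ δ :=
    two_mul_mul_exp_le_of_le hK hεη0 hεη hδ.1 hδ.2.le (by rwa [mul_pow])
  let _ : MeasurableSpace E := ⊤
  have : Nonempty E := Fintype.card_pos_iff.1 (by omega)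
  obtain ⟨ν, _, hνq⟩ := exists_isProbabilityMeasure_measureReal_singleton hq0 hq1
  have hbad := measureReal_pi_exists_lt_abs_empiricalFreq_sub_le ν m
    (t := ε * η / 3) (by positivity)
  simp only [hνq] at hbad
  rw [← measureReal_pi_setOf_eq_sum_prod ν hνq]
  calc 1 - δ ≤ (Measure.pi fun _ : Fin m => ν).real
        {W | ∃ e, ε * η / 3 < |empiricalFreq W e - (freq e : ℝ) / n|}ᶜ := by
        rw [probReal_compl_eq_one_sub .of_discrete]; linarith
    _ ≤ _ := measureReal_mono fun W hW =>
        half_sum_abs_normalize_div_pHat_sub_le hη hbal hε.1.le hε.2.le (by simpa using hW)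
end

section
/- Let E be a nonempty finite set, let p be a probability mass function on E with p(e) ≥ η > 0 for all e ∈ E, let ε ∈ (0,1), and let p̂ : E → ℝ satisfy |p̂(e) − p(e)| ≤ εη/(1+ε) for all e ∈ E. Then p̂(e) > 0 for every e, and the probability distribution P on E defined by P(e) = (p(e)/p̂(e)) / Σ_{e'∈E} (p(e')/p̂(e')) satisfies that the total variation distance between P and the uniform distribution on E is at most ε. -/
open scoped BigOperators

/-- If `p` is a pmf on `E` bounded below by `η > 0` and `p̂` estimates `p`
within additive error `εη/(1+ε)`, then `p̂ > 0` everywhere and the distribution with mass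
proportional to `p(e)/p̂(e)` is within total variation distance `ε` of uniform on `E`. -/
theorem stmt_3 {E : Type*} [Fintype E] [Nonempty E]
    (η ε : ℝ) (p phat : E → ℝ)
    (hp0 : ∀ e : E, 0 ≤ p e) (hsum : ∑ e : E, p e = 1)
    (hη : 0 < η) (hpη : ∀ e : E, η ≤ p e)
    (hε : ε ∈ Set.Ioo (0:ℝ) 1)
    (hest : ∀ e : E, |phat e - p e| ≤ ε * η / (1 + ε)) :
    (∀ e : E, 0 < phat e) ∧
      (1 / 2 : ℝ) *
          ∑ e : E, |(p e / phat e) / (∑ e' : E, p e' / phat e') -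
            1 / (Fintype.card E : ℝ)| ≤ ε := by
  obtain ⟨hε0, hε1⟩ := hε
  have h1ε : (0:ℝ) < 1 + ε := by linarith
  set δ := ε * η / (1 + ε) with hδdef
  have hδ0 : 0 < δ := by positivity
  have hδη : δ < η := by
    rw [hδdef, div_lt_iff₀ h1ε]; nlinarith
  have hphat : ∀ e : E, 0 < phat e := by
    intro e
    have h := (abs_le.mp (hest e)).1
    have := hpη e
    linarith
  refine ⟨hphat, ?_⟩
  set n := (Fintype.card E : ℝ) with hn
  have hnpos : 0 < n := by
    rw [hn]
    exact_mod_cast Fintype.card_pos (α := E)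
  set S := ∑ e' : E, p e' / phat e' with hS
  have hSpos : 0 < S :=
    Finset.sum_pos (fun e _ => div_pos (lt_of_lt_of_le hη (hpη e)) (hphat e))
      Finset.univ_nonempty
  set T := ∑ e : E, 1 / phat e with hT
  have hTpos : 0 < T :=
    Finset.sum_pos (fun e _ => one_div_pos.mpr (hphat e)) Finset.univ_nonempty
  -- pointwise bound on ratio
  have hr1 : ∀ e : E, |p e / phat e - 1| ≤ δ * (1 / phat e) := by
    intro e
    have h := hphat e
    have heq : p e / phat e - 1 = (p e - phat e) / phat e := by field_simp
    rw [heq, abs_div, abs_of_pos h, mul_one_div, div_le_div_iff_of_pos_right h,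
      abs_sub_comm]
    exact hest e
  set A := ∑ e : E, |p e / phat e - 1| with hA
  have hAδT : A ≤ δ * T := by
    rw [hA, hT, Finset.mul_sum]
    exact Finset.sum_le_sum fun e _ => hr1 e
  have hSηT : η * T ≤ S := by
    rw [hS, hT, Finset.mul_sum]
    refine Finset.sum_le_sum fun e _ => ?_
    rw [mul_one_div]
    gcongr
    · exact (hphat e).le
    · exact hpη e
  have hnS : |n - S| ≤ A := by
    have : n - S = ∑ e : E, (1 - p e / phat e) := by
      rw [hn, hS, Finset.sum_sub_distrib, Finset.sum_const, Finset.card_univ]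
      simp
    rw [this]
    calc |∑ e : E, (1 - p e / phat e)| ≤ ∑ e : E, |1 - p e / phat e| :=
          Finset.abs_sum_le_sum_abs _ _
      _ = A := by rw [hA]; exact Finset.sum_congr rfl fun e _ => abs_sub_comm _ _
  -- main bound
  have hmain : ∑ e : E, |(p e / phat e) / S - 1 / n| ≤ 2 * A / S := by
    have hstep : ∀ e : E, |(p e / phat e) / S - 1 / n| ≤
        |p e / phat e - 1| / S + |n - S| / (S * n) := by
      intro e
      have h1 : (p e / phat e) / S - 1 / n =
          (p e / phat e - 1) / S + (n - S) / (S * n) := by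
        field_simp [hSpos.ne', hnpos.ne', (hphat e).ne']
        ring
      rw [h1]
      calc |(p e / phat e - 1) / S + (n - S) / (S * n)| ≤
            |(p e / phat e - 1) / S| + |(n - S) / (S * n)| := abs_add_le _ _
        _ = |p e / phat e - 1| / S + |n - S| / (S * n) := by
            rw [abs_div, abs_div, abs_of_pos hSpos, abs_of_pos (mul_pos hSpos hnpos)]
    calc ∑ e : E, |(p e / phat e) / S - 1 / n|
        ≤ ∑ e : E, (|p e / phat e - 1| / S + |n - S| / (S * n)) :=
          Finset.sum_le_sum fun e _ => hstep e
      _ = A / S + n * (|n - S| / (S * n)) := by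
          rw [Finset.sum_add_distrib, Finset.sum_const, Finset.card_univ, hA,
            Finset.sum_div]
          simp [hn, nsmul_eq_mul]
      _ = A / S + |n - S| / S := by
          rw [mul_div_assoc']
          congr 1
          field_simp
      _ ≤ A / S + A / S := by
          gcongr
      _ = 2 * A / S := by ring
  have hAS : A / S ≤ ε / (1 + ε) := by
    rw [div_le_div_iff₀ hSpos h1ε]
    calc A * (1 + ε) ≤ δ * T * (1 + ε) := by
          have hA0 : 0 ≤ A := Finset.sum_nonneg fun e _ => abs_nonneg _
          gcongr
      _ = ε * (η * T) := by rw [hδdef]; field_simp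
      _ ≤ ε * S := by gcongr
  calc (1 / 2 : ℝ) * ∑ e : E, |(p e / phat e) / S - 1 / n|
      ≤ (1 / 2) * (2 * A / S) := by
        have h := hmain
        linarith [hmain]
    _ = A / S := by ring
    _ ≤ ε / (1 + ε) := hAS
    _ ≤ ε := by rw [div_le_iff₀ h1ε]; nlinarith
end

section
/- Let X be a finite multiset over a finite entity set E, with prob(e) = freq(e)/|X|, and set η₁ = max_{e∈E} prob(e), η₂ = min_{e∈E} prob(e) > 0. Let p̂ : E → ℝ satisfy |p̂(e) − prob(e)| ≤ ε for all e ∈ E, where 0 ≤ ε < η₂, and let m̂ = min_{e∈E} p̂(e). Consider one iteration of rejection sampling: draw v uniformly at random from the multiset X and, independently, a uniformly at random from [0,1], and accept iff a < m̂/p̂(v). Then the probability of acceptance in one iteration is at least (η₂ − ε)/(η₁ + ε), and consequently the expected number of iterations until the first acceptance is at most (η₁ + ε)/(η₂ − ε). -/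
open scoped BigOperators

/-- One iteration of rejection sampling: draw an element `v` of the dataset uniformly at
random (so entity `e` is drawn with probability `prob e`) and an independent uniform
`a ∈ [0,1]`, and accept iff `a < m̂ / p̂(v)`, where `m̂ = min_e p̂(e)`. The acceptance
probability is `∑ e, prob e · P[a < m̂/p̂(e)]`, and `P[a < t] = min 1 (max 0 t)` for a
uniform `a ∈ [0,1]`. -/
noncomputable def acceptProb {E : Type*} [Fintype E] [Nonempty E]
    (prob phat : E → ℝ) : ℝ :=
  ∑ e : E, prob e *
    min 1 (max 0 ((Finset.univ.inf' Finset.univ_nonempty phat) / phat e))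

/-- For a dataset with entity probabilities `prob(e) = freq(e)/|X|`,
`η₁ = max prob`, `η₂ = min prob > 0`, and estimates `p̂` with `|p̂(e) − prob(e)| ≤ ε`
where `0 ≤ ε < η₂`, one iteration of rejection sampling accepts with probability at least
`(η₂ − ε)/(η₁ + ε)`; consequently the expected number of iterations until the first
acceptance (the mean `1/acceptProb` of the corresponding geometric random variable) is at
most `(η₁ + ε)/(η₂ − ε)`. -/
theorem stmt_4 {E : Type*} [Fintype E] [Nonempty E]
    (freq : E → ℕ) (hpos : 0 < ∑ e : E, freq e)
    (phat : E → ℝ) (ε η₁ η₂ : ℝ) (hε : 0 ≤ ε)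
    (hη₁ : η₁ = Finset.univ.sup' Finset.univ_nonempty
      (fun e => (freq e : ℝ) / (∑ e' : E, freq e')))
    (hη₂ : η₂ = Finset.univ.inf' Finset.univ_nonempty
      (fun e => (freq e : ℝ) / (∑ e' : E, freq e')))
    (hη₂pos : 0 < η₂) (hεlt : ε < η₂)
    (hest : ∀ e : E, |phat e - (freq e : ℝ) / (∑ e' : E, freq e')| ≤ ε) :
    (η₂ - ε) / (η₁ + ε) ≤
        acceptProb (fun e => (freq e : ℝ) / (∑ e' : E, freq e')) phat ∧
      1 / acceptProb (fun e => (freq e : ℝ) / (∑ e' : E, freq e')) phat ≤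
        (η₁ + ε) / (η₂ - ε) := by

  set prob : E → ℝ := fun e => (freq e : ℝ) / (∑ e' : E, freq e') with hprob
  have hS : (0:ℝ) < ∑ e' : E, freq e' := by exact_mod_cast hpos
  have hprobsum : ∑ e : E, prob e = 1 := by
    simp only [hprob]
    rw [← Finset.sum_div]
    rw [← Nat.cast_sum]; exact div_self (ne_of_gt hS)
  have hη₂le : ∀ e, η₂ ≤ prob e := fun e => hη₂ ▸ Finset.inf'_le _ (Finset.mem_univ e)
  have hleη₁ : ∀ e, prob e ≤ η₁ := fun e => hη₁ ▸ Finset.le_sup' _ (Finset.mem_univ e)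
  have hlow : ∀ e, η₂ - ε ≤ phat e := by
    intro e
    have := abs_le.mp (hest e)
    have := hη₂le e
    simp only [hprob] at *
    linarith [this]
  have hhigh : ∀ e, phat e ≤ η₁ + ε := by
    intro e
    have h1 := abs_le.mp (hest e)
    have h2 := hleη₁ e
    simp only [hprob] at *
    linarith [h1.2]
  have hη₂ε : (0:ℝ) < η₂ - ε := by linarith
  have hη₁ε : (0:ℝ) < η₁ + ε := by
    have := le_trans (hη₂le (Classical.arbitrary E)) (hleη₁ (Classical.arbitrary E))
    linarith
  set m := Finset.univ.inf' Finset.univ_nonempty phat with hm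
  have hmlow : η₂ - ε ≤ m := by
    obtain ⟨e₀, _, he₀⟩ := Finset.exists_mem_eq_inf' Finset.univ_nonempty phat
    rw [hm, he₀]; exact hlow e₀
  set c : ℝ := (η₂ - ε) / (η₁ + ε) with hc
  have hcpos : 0 < c := div_pos hη₂ε hη₁ε
  have hc1 : c ≤ 1 := by
    rw [hc, div_le_one hη₁ε]
    have := le_trans (hη₂le (Classical.arbitrary E)) (hleη₁ (Classical.arbitrary E))
    linarith
  have hkey : ∀ e, c ≤ min 1 (max 0 (m / phat e)) := by
    intro e
    refine le_min hc1 (le_max_of_le_right ?_)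
    exact div_le_div₀ (le_trans hη₂ε.le hmlow) hmlow (lt_of_lt_of_le hη₂ε (hlow e)) (hhigh e)
  have hA : c ≤ acceptProb prob phat := by
    unfold acceptProb
    calc c = ∑ e : E, prob e * c := by rw [← Finset.sum_mul, hprobsum, one_mul]
    _ ≤ _ := by
        apply Finset.sum_le_sum
        intro e _
        have hpe : 0 ≤ prob e := le_trans hη₂pos.le (hη₂le e)
        exact mul_le_mul_of_nonneg_left (hkey e) hpe
  refine ⟨hA, ?_⟩
  have := one_div_le_one_div_of_le hcpos hA
  rwa [hc, one_div_div] at this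
end

section
/- Let λ, δ ∈ (0,1) and let r, s be positive integers with r < 1/(−ln(1−λ)) and s ≥ 2.2·ln(1/δ). Let x, y be two fixed points with d(x,y) ≤ λ and let B₁,…,B_{rs} be independent Bernoulli random variables with success probability 1 − d(x,y) each, where B_{(j−1)r+i} is the indicator of the event that the ((j−1)r+i)-th hash function agrees on x and y. Say x and y collide in band j (1 ≤ j ≤ s) if B_{(j−1)r+1} = ⋯ = B_{jr} = 1, and say x, y belong to the same group if they collide in at least one band. Then P[x and y belong to the same group] > 1 − δ. -/
open scoped BigOperators Classical

/-- LSH banding guarantee. Let `d(x,y) ≤ λ` and consider `r·s` independent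
Bernoulli indicators of hash agreement (arranged as `s` bands of `r` functions each,
`ω j i` being the indicator that the `i`-th hash of band `j` agrees on `x` and `y`), each
with success probability `1 − d(x,y)`. If `r < 1/(−ln(1−λ))` and `s ≥ 2.2·ln(1/δ)`, then
the probability that some band agrees entirely (i.e. `x` and `y` share a group) exceeds
`1 − δ`. -/
theorem stmt_6 (lam δ dxy : ℝ)
    (hlam : lam ∈ Set.Ioo (0:ℝ) 1) (hδ : δ ∈ Set.Ioo (0:ℝ) 1)
    (r s : ℕ) (hr : 1 ≤ r) (hs : 1 ≤ s)
    (hd0 : 0 ≤ dxy) (hdlam : dxy ≤ lam)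
    (hrb : (r : ℝ) < 1 / (-Real.log (1 - lam)))
    (hsb : 2.2 * Real.log (1 / δ) ≤ (s : ℝ)) :
    1 - δ <
      ∑ ω ∈ Finset.univ.filter
          (fun ω : Fin s → Fin r → Bool => ∃ j, ∀ i, ω j i = true),
        ∏ j, ∏ i, if ω j i then 1 - dxy else dxy := by
  obtain ⟨hl0, hl1⟩ := hlam
  obtain ⟨hδ0, hδ1⟩ := hδ
  have hdxy1 : dxy < 1 := lt_of_le_of_lt hdlam hl1
  set p : ℝ := 1 - dxy with hp
  have hp0 : 0 < p := by simp only [hp]; linarith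
  have hp1 : p ≤ 1 := by simp only [hp]; linarith
  set g : (Fin r → Bool) → ℝ := fun b => ∏ i, if b i then p else dxy with hg
  have hband : ∑ b : Fin r → Bool, g b = 1 := by
    have h := Finset.sum_prod_piFinset (Finset.univ : Finset Bool)
      (fun (_ : Fin r) b => if b then p else dxy)
    rw [Fintype.piFinset_univ] at h
    rw [hg, h]
    have : ∑ b : Bool, (if b then p else dxy) = 1 := by simp [hp]
    rw [Finset.prod_congr rfl fun i _ => this]
    simp
  have htruefilter : Finset.univ.filter (fun b : Fin r → Bool => ∀ i, b i = true)
      = {fun _ => true} := by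
    ext b
    simp [funext_iff]
  have hfail : ∑ b ∈ Finset.univ.filter (fun b : Fin r → Bool => ¬ ∀ i, b i = true), g b
      = 1 - p ^ r := by
    have hsplit := Finset.sum_filter_add_sum_filter_not Finset.univ
      (fun b : Fin r → Bool => ∀ i, b i = true) g
    rw [htruefilter] at hsplit
    simp only [Finset.sum_singleton] at hsplit
    have hgt : g (fun _ => true) = p ^ r := by simp [hg]
    rw [hgt] at hsplit
    linarith [hband, hsplit]
  have key : (∑ ω ∈ Finset.univ.filter
          (fun ω : Fin s → Fin r → Bool => ∃ j, ∀ i, ω j i = true),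
        ∏ j, ∏ i, if ω j i then 1 - dxy else dxy) = 1 - (1 - p ^ r) ^ s := by
    have htot : ∑ ω : Fin s → Fin r → Bool, ∏ j, g (ω j) = 1 := by
      have h := Finset.sum_prod_piFinset (Finset.univ : Finset (Fin r → Bool))
        (fun (_ : Fin s) b => g b)
      rw [Fintype.piFinset_univ] at h
      rw [h, Finset.prod_congr rfl fun j _ => hband]
      simp
    have hcompl : ∑ ω ∈ Finset.univ.filter
        (fun ω : Fin s → Fin r → Bool => ¬ ∃ j, ∀ i, ω j i = true),
        ∏ j, g (ω j) = (1 - p ^ r) ^ s := by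
      have hset : Finset.univ.filter
          (fun ω : Fin s → Fin r → Bool => ¬ ∃ j, ∀ i, ω j i = true)
          = Fintype.piFinset (fun _ : Fin s =>
              Finset.univ.filter (fun b : Fin r → Bool => ¬ ∀ i, b i = true)) := by
        ext ω
        simp [Fintype.mem_piFinset, not_exists]
      rw [hset, Finset.sum_prod_piFinset]
      rw [Finset.prod_congr rfl fun j _ => hfail]
      simp
    have hsplit := Finset.sum_filter_add_sum_filter_not Finset.univ
      (fun ω : Fin s → Fin r → Bool => ∃ j, ∀ i, ω j i = true)
      (fun ω => ∏ j, g (ω j))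
    rw [htot, hcompl] at hsplit
    have hterm : ∀ ω : Fin s → Fin r → Bool,
        (∏ j, ∏ i, if ω j i then 1 - dxy else dxy) = ∏ j, g (ω j) := by
      intro ω
      simp [hg, hp]
    rw [Finset.sum_congr rfl fun ω _ => hterm ω]
    linarith
  rw [key]
  -- analytic part: (1 - p^r)^s < δ
  have hL : Real.log (1 - lam) < 0 :=
    Real.log_neg (by linarith) (by linarith)
  -- p^r > exp(-1)
  have hpr : Real.exp (-1) < p ^ r := by
    have h1lam : (0:ℝ) < 1 - lam := by linarith
    have hrL : (r : ℝ) * (-Real.log (1 - lam)) < 1 := by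
      rw [lt_div_iff₀ (by linarith : (0:ℝ) < -Real.log (1 - lam))] at hrb
      linarith
    have h2 : Real.exp (-1) < Real.exp ((r : ℝ) * Real.log (1 - lam)) := by
      apply Real.exp_lt_exp.2
      nlinarith
    have h3 : Real.exp ((r : ℝ) * Real.log (1 - lam)) = (1 - lam) ^ r := by
      rw [Real.exp_nat_mul, Real.exp_log h1lam]
    have h4 : (1 - lam) ^ r ≤ p ^ r := by
      apply pow_le_pow_left₀ (le_of_lt h1lam)
      simp only [hp]; linarith
    linarith [h2, h3 ▸ h2]
  have hprle : p ^ r ≤ 1 := pow_le_one₀ (le_of_lt hp0) hp1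
  set c : ℝ := 1 - Real.exp (-1) with hc
  have hexp1pos : (0:ℝ) < Real.exp (-1) := Real.exp_pos _
  have hexp1lt1 : Real.exp (-1) < 1 := Real.exp_lt_one_iff.2 (by norm_num)
  have hc0 : 0 < c := by simp only [hc]; linarith
  have hc1 : c < 1 := by simp only [hc]; linarith
  have hstep1 : (1 - p ^ r) ^ s < c ^ s := by
    apply pow_lt_pow_left₀ _ (by linarith) (by omega)
    simp only [hc]; linarith
  have hcs : c ^ s ≤ δ := by
    -- log c ≤ -5/11
    have hlogc : Real.log c ≤ -(5/11) := by
      rw [Real.log_le_iff_le_exp hc0]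
      -- c ≤ exp(-5/11); show via 11th powers
      have h11 : c ^ (11:ℕ) ≤ (Real.exp (-(5/11))) ^ (11:ℕ) := by
        have he : (Real.exp (-(5/11:ℝ))) ^ (11:ℕ) = Real.exp (-5) := by
          rw [← Real.exp_nat_mul]; norm_num
        rw [he]
        have hub : Real.exp 1 < 2.7182818286 := by
          have := Real.exp_one_lt_d9; linarith
        have hlb : 2.7182818283 < Real.exp 1 := by
          have := Real.exp_one_gt_d9; linarith
        have hm1 : Real.exp (-1) = (Real.exp 1)⁻¹ := by
          rw [← Real.exp_neg]
        have hm1lb : (2.7182818286:ℝ)⁻¹ < Real.exp (-1) := by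
          rw [hm1]
          apply inv_strictAnti₀ (Real.exp_pos 1) hub
        have hcub : c ≤ 1 - (2.7182818286:ℝ)⁻¹ := by
          simp only [hc]; linarith
        have hc11 : c ^ (11:ℕ) ≤ (1 - (2.7182818286:ℝ)⁻¹) ^ (11:ℕ) :=
          pow_le_pow_left₀ (le_of_lt hc0) hcub 11
        have hm5 : Real.exp (-5) = ((Real.exp 1) ^ (5:ℕ))⁻¹ := by
          rw [← Real.exp_nat_mul, ← Real.exp_neg]; norm_num
        have hm5lb : ((2.7182818286:ℝ) ^ (5:ℕ))⁻¹ < Real.exp (-5) := by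
          rw [hm5]
          apply inv_strictAnti₀ (pow_pos (Real.exp_pos 1) 5)
          exact pow_lt_pow_left₀ hub (le_of_lt (Real.exp_pos 1)) (by norm_num)
        have hnum : (1 - (2.7182818286:ℝ)⁻¹) ^ (11:ℕ) ≤ ((2.7182818286:ℝ) ^ (5:ℕ))⁻¹ := by
          norm_num
        exact le_of_lt (lt_of_le_of_lt (le_trans hc11 hnum) hm5lb)
      exact (pow_le_pow_iff_left₀ (b := Real.exp (-(5/11:ℝ))) (le_of_lt hc0)
        (le_of_lt (Real.exp_pos _)) (by norm_num : (11:ℕ) ≠ 0)).1 h11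
    have hlog1δ : 0 < Real.log (1 / δ) := by
      apply Real.log_pos
      rw [lt_div_iff₀ hδ0]; linarith
    have hlogδ : Real.log (1 / δ) = -Real.log δ := by
      rw [one_div, Real.log_inv]
    have hlogcneg : Real.log c < 0 := Real.log_neg hc0 hc1
    have hchain : (s : ℝ) * Real.log c ≤ Real.log δ := by
      have h1 : (s : ℝ) * Real.log c ≤ (2.2 * Real.log (1 / δ)) * Real.log c := by
        apply mul_le_mul_of_nonpos_right hsb (le_of_lt hlogcneg)
      have h2 : (2.2 * Real.log (1 / δ)) * Real.log c ≤ Real.log δ := by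
        rw [hlogδ]
        have h22 : (0:ℝ) ≤ 2.2 * (-Real.log δ) := by
          rw [hlogδ] at hlog1δ; linarith
        have hm := mul_le_mul_of_nonneg_left hlogc h22
        linarith
      linarith
    calc c ^ s = Real.exp ((s : ℝ) * Real.log c) := by
          rw [Real.exp_nat_mul, Real.exp_log hc0]
      _ ≤ Real.exp (Real.log δ) := Real.exp_le_exp.2 hchain
      _ = δ := Real.exp_log hδ0
  have : (1 - p ^ r) ^ s < δ := lt_of_lt_of_le hstep1 hcs
  linarith
end

section
/- Let λ, δ ∈ (0,1), let r ≥ 1 be an integer with r < 1/ln(1/(1−λ)), and let s ≥ 1 be an integer with s ≥ 2.2·ln(1/δ). Then for every real f with 1 − λ ≤ f ≤ 1, one has (1 − f^r)^s < δ. -/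
lemma exp511_le : Real.exp (5/11) ≤ 1.5758 := by
  have h := Real.exp_bound' (x := 5/11) (n := 4) (by norm_num) (by norm_num) (by norm_num)
  calc Real.exp (5/11) ≤ _ := h
    _ ≤ 1.5758 := by
      simp [Finset.sum_range_succ, Nat.factorial]
      norm_num

lemma key_num : 1 - Real.exp (-1) < Real.exp (-(5/11)) := by
  have h1 : Real.exp (-(5/11)) = (Real.exp (5/11))⁻¹ := Real.exp_neg _
  have hpos : (0:ℝ) < Real.exp (5/11) := Real.exp_pos _
  have h2 : (0.6345 : ℝ) ≤ Real.exp (-(5/11)) := by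
    rw [h1, le_inv_comm₀ (by norm_num) hpos]
    calc Real.exp (5/11) ≤ 1.5758 := exp511_le
      _ ≤ (0.6345:ℝ)⁻¹ := by norm_num
  have h3 : (0.3678 : ℝ) < Real.exp (-1) := by
    have := Real.exp_one_lt_d9
    have h4 : Real.exp (-1) = (Real.exp 1)⁻¹ := Real.exp_neg _
    rw [h4, lt_inv_comm₀ (by norm_num) (Real.exp_pos 1)]
    calc Real.exp 1 < 2.7182818286 := this
      _ ≤ (0.3678:ℝ)⁻¹ := by norm_num
  linarith

/-- With `r < 1/ln(1/(1−λ))` and `s ≥ 2.2·ln(1/δ)`, every collision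
probability `f ∈ [1−λ, 1]` satisfies `(1 − f^r)^s < δ`. -/
theorem stmt_7 (lam δ : ℝ) (hlam : lam ∈ Set.Ioo (0:ℝ) 1) (hδ : δ ∈ Set.Ioo (0:ℝ) 1)
    (r s : ℕ) (hr : 1 ≤ r) (hs : 1 ≤ s)
    (hrb : (r : ℝ) < 1 / Real.log (1 / (1 - lam)))
    (hsb : 2.2 * Real.log (1 / δ) ≤ (s : ℝ)) :
    ∀ f : ℝ, 1 - lam ≤ f → f ≤ 1 → (1 - f ^ r) ^ s < δ := by
  intro f hf1 hf2
  obtain ⟨hlam0, hlam1⟩ := hlam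
  obtain ⟨hδ0, hδ1⟩ := hδ
  have hml : (0:ℝ) < 1 - lam := by linarith
  have hlog : 0 < Real.log (1 / (1 - lam)) := by
    apply Real.log_pos
    rw [lt_div_iff₀ hml]; linarith
  -- r * log(1/(1-lam)) < 1
  have hr1 : (r : ℝ) * Real.log (1 / (1 - lam)) < 1 := by
    exact (lt_div_iff₀ hlog).mp hrb
  -- (1-lam)^r > exp(-1)
  have hpow : Real.exp (-1) < (1 - lam) ^ r := by
    have hlog2 : Real.log ((1 - lam) ^ r) = - ((r:ℝ) * Real.log (1 / (1 - lam))) := by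
      rw [Real.log_pow, Real.log_div one_ne_zero (ne_of_gt hml), Real.log_one]
      push_cast; ring
    have : -1 < Real.log ((1 - lam) ^ r) := by rw [hlog2]; linarith
    calc Real.exp (-1) < Real.exp (Real.log ((1-lam)^r)) := Real.exp_lt_exp.mpr this
      _ = (1-lam)^r := Real.exp_log (pow_pos hml r)
  have hfr : Real.exp (-1) < f ^ r :=
    lt_of_lt_of_le hpow (pow_le_pow_left₀ hml.le hf1 r)
  have hf0 : (0:ℝ) ≤ f := le_trans hml.le hf1
  have ha0 : (0:ℝ) ≤ 1 - f ^ r := by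
    have := pow_le_one₀ hf0 hf2 (n := r)
    linarith
  have ha : 1 - f ^ r < Real.exp (-(5/11)) := by
    have := key_num
    linarith
  have hstep : (1 - f ^ r) ^ s < Real.exp (-(5/11)) ^ s :=
    pow_lt_pow_left₀ ha ha0 (by omega)
  have hexp : Real.exp (-(5/11)) ^ s = Real.exp (-(5/11) * s) := by
    rw [← Real.exp_nat_mul]; ring_nf
  have hfin : Real.exp (-(5/11) * s) ≤ δ := by
    rw [← Real.exp_log hδ0]
    apply Real.exp_le_exp.mpr
    have hlogδ : Real.log (1/δ) = - Real.log δ := by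
      rw [Real.log_div one_ne_zero (ne_of_gt hδ0), Real.log_one]; ring
    rw [hlogδ] at hsb
    nlinarith
  calc (1 - f ^ r) ^ s < Real.exp (-(5/11)) ^ s := hstep
    _ = Real.exp (-(5/11) * s) := hexp
    _ ≤ δ := hfin
end

section
/- Let p ≥ 1, let e₁,…,e_n ∈ ℝ^p satisfy ‖e_i − e_j‖ > δ for all i ≠ j, where δ > 2. For each i let X_i be a finite set of points contained in the closed unit ball around e_i with e_i ∈ X_i, and assume |X_i| ≥ 2 for 1 ≤ i ≤ k and X_i = {e_i} for k+1 ≤ i ≤ n. Let X = ∪_{i=1}^n X_i, and for x ∈ X define S_x = {y ∈ X : ‖x − y‖ ≤ 1}. Let X' = ∪{S_x : x ∈ X, |S_x| > 1}. Then X \ X' = {e_{k+1},…,e_n}; that is, the points removed by the singleton-detection step are exactly the singleton entities. -/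
/-- Singleton-detection step of the regularized clustering algorithm on a
`δ`-isotropic set. Entities `e₁,…,e_n ∈ ℝ^p` are pairwise more than `δ > 2` apart, each
record set `X_i` lies in the closed unit ball around `e_i` and contains `e_i`, the first
`k` record sets have at least two points and the remaining ones are singletons. With
`S x = {y ∈ X : dist x y ≤ 1}` and `X' = ⋃ {S x : x ∈ X, |S x| > 1}`, the removed points
`X \ X'` are exactly the singleton entities `{e_{k+1},…,e_n}`. -/
theorem stmt_9 (p n k : ℕ) (hp : 1 ≤ p) (hk : k ≤ n) (δ : ℝ) (hδ : 2 < δ)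
    (e : Fin n → EuclideanSpace ℝ (Fin p))
    (hsep : ∀ i j : Fin n, i ≠ j → δ < dist (e i) (e j))
    (X : Fin n → Set (EuclideanSpace ℝ (Fin p)))
    (hfin : ∀ i, (X i).Finite)
    (hball : ∀ i, X i ⊆ Metric.closedBall (e i) 1)
    (hmem : ∀ i, e i ∈ X i)
    (hbig : ∀ i : Fin n, (i : ℕ) < k → 2 ≤ (X i).ncard)
    (hsing : ∀ i : Fin n, k ≤ (i : ℕ) → X i = {e i})
    (S : EuclideanSpace ℝ (Fin p) → Set (EuclideanSpace ℝ (Fin p)))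
    (hS : ∀ x, S x = {y ∈ ⋃ i, X i | dist x y ≤ 1})
    (X' : Set (EuclideanSpace ℝ (Fin p)))
    (hX' : X' = ⋃ x ∈ {x ∈ ⋃ i, X i | 1 < (S x).ncard}, S x) :
    (⋃ i, X i) \ X' = {x | ∃ i : Fin n, k ≤ (i : ℕ) ∧ x = e i} := by
  have hXfin : (⋃ i, X i).Finite := Set.finite_iUnion hfin
  have hSsub : ∀ x, S x ⊆ ⋃ i, X i := by
    intro x
    rw [hS x]; exact Set.sep_subset _ _
  have hSfin : ∀ x, (S x).Finite := fun x => hXfin.subset (hSsub x)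
  -- cross-cluster distance bound for entities
  have hcross : ∀ (i j : Fin n) (z : EuclideanSpace ℝ (Fin p)),
      z ∈ X j → dist (e i) z ≤ 1 → j = i := by
    intro i j z hz hd
    by_contra hne
    have h1 : dist z (e j) ≤ 1 := Metric.mem_closedBall.1 (hball j hz)
    have : dist (e i) (e j) ≤ 2 := by
      calc dist (e i) (e j) ≤ dist (e i) z + dist z (e j) := dist_triangle _ _ _
        _ ≤ 1 + 1 := add_le_add hd h1
        _ = 2 := by norm_num
    have := hsep i j (fun h => hne (h ▸ rfl))
    linarith
  ext x
  simp only [Set.mem_diff, Set.mem_setOf_eq]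
  constructor
  · rintro ⟨hxX, hxX'⟩
    obtain ⟨_, ⟨i, rfl⟩, hxi⟩ := hxX
    by_cases hik : (i : ℕ) < k
    · exfalso
      apply hxX'
      have hxU : x ∈ ⋃ i, X i := Set.mem_iUnion.2 ⟨i, hxi⟩
      have hxSx : x ∈ S x := by
        rw [hS x]; exact ⟨hxU, by simp⟩
      have heiSx : e i ∈ S x := by
        rw [hS x]
        exact ⟨Set.mem_iUnion.2 ⟨i, hmem i⟩, Metric.mem_closedBall.1 (hball i hxi)⟩
      have hbigS : 1 < (S x).ncard := by
        by_cases hxe : x = e i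
        · have hsub : X i ⊆ S x := by
            intro y hy
            rw [hS x]
            refine ⟨Set.mem_iUnion.2 ⟨i, hy⟩, ?_⟩
            rw [hxe, dist_comm]
            exact Metric.mem_closedBall.1 (hball i hy)
          have := Set.ncard_le_ncard hsub (hSfin x)
          have := hbig i hik
          omega
        · exact (Set.one_lt_ncard_iff (hSfin x)).2 ⟨x, e i, hxSx, heiSx, hxe⟩
      rw [hX']
      exact Set.mem_biUnion ⟨hxU, hbigS⟩ hxSx
    · have hki : k ≤ (i : ℕ) := le_of_not_gt hik
      have hxi2 : x ∈ X i := hxi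
      rw [hsing i hki] at hxi2
      exact ⟨i, hki, hxi2⟩
  · rintro ⟨i, hki, rfl⟩
    refine ⟨Set.mem_iUnion.2 ⟨i, hmem i⟩, ?_⟩
    intro hmemX'
    rw [hX'] at hmemX'
    obtain ⟨y, ⟨hyX, hyS⟩, heiy⟩ := Set.mem_iUnion₂.1 hmemX'
    rw [hS y] at heiy
    obtain ⟨_, hd⟩ := heiy
    -- y is within 1 of e i, so y ∈ X i = {e i}, hence y = e i
    obtain ⟨_, ⟨j, rfl⟩, hyj⟩ := hyX
    have hdy : dist (e i) y ≤ 1 := by rw [dist_comm]; exact hd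
    have hji : j = i := hcross i j y hyj hdy
    subst hji
    have hyj2 : y ∈ X j := hyj
    rw [hsing j hki] at hyj2
    have hy : y = e j := hyj2
    rw [hy] at hyS
    -- now S (e j) ⊆ {e j}
    have hsub : S (e j) ⊆ {e j} := by
      intro z hz
      rw [hS (e j)] at hz
      obtain ⟨hzX, hdz⟩ := hz
      obtain ⟨_, ⟨m, rfl⟩, hzm⟩ := hzX
      have hmj : m = j := hcross j m z hzm hdz
      subst hmj
      have hzm2 : z ∈ X m := hzm
      rw [hsing m hki] at hzm2
      exact hzm2
    have : (S (e j)).ncard ≤ 1 := by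
      calc (S (e j)).ncard ≤ ({e j} : Set _).ncard :=
            Set.ncard_le_ncard hsub (Set.finite_singleton _)
        _ = 1 := Set.ncard_singleton _
    omega
end

section
/- Let E be a nonempty finite set, c > 0, and ξ, α ∈ [0,1). Let w : E → ℝ satisfy c·(1−ξ)·(1−α) ≤ w(e) ≤ c·(1+ξ)·(1+α) for all e ∈ E, and define the probability distribution P on E by P(e) = w(e)/Σ_{e'∈E} w(e'). Then the total variation distance between P and the uniform distribution on E is at most ξ + α. -/
open scoped BigOperators

theorem sum_abs_key {E : Type*} [Fintype E] (b : E → ℝ) (hb : ∑ e : E, b e = 0) :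
    (1/2 : ℝ) * ∑ e : E, |b e| = ∑ e : E, max (b e) 0 := by
  have h1 : ∀ e : E, |b e| = 2 * max (b e) 0 - b e := by
    intro e
    rcases le_or_gt (b e) 0 with h | h
    · rw [max_eq_right h, abs_of_nonpos h]; ring
    · rw [max_eq_left h.le, abs_of_pos h]; ring
  calc (1/2 : ℝ) * ∑ e : E, |b e|
      = (1/2 : ℝ) * ∑ e : E, (2 * max (b e) 0 - b e) := by
        congr 1; exact Finset.sum_congr rfl fun e _ => h1 e
    _ = (1/2 : ℝ) * (2 * (∑ e : E, max (b e) 0) - ∑ e : E, b e) := by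
        rw [Finset.sum_sub_distrib, Finset.mul_sum]
    _ = ∑ e : E, max (b e) 0 := by rw [hb]; ring

/-- If all weights `w e` lie in `[c(1−ξ)(1−α), c(1+ξ)(1+α)]`, then the
normalized distribution `P e = w e / Σ w` is within total variation distance `ξ + α` of
the uniform distribution on `E`. -/
theorem stmt_19 {E : Type*} [Fintype E] [Nonempty E]
    (c ξ α : ℝ) (hc : 0 < c)
    (hξ : ξ ∈ Set.Ico (0:ℝ) 1) (hα : α ∈ Set.Ico (0:ℝ) 1)
    (w : E → ℝ)
    (hw : ∀ e : E, c * (1 - ξ) * (1 - α) ≤ w e ∧ w e ≤ c * (1 + ξ) * (1 + α)) :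
    (1 / 2 : ℝ) *
        ∑ e : E, |w e / (∑ e' : E, w e') - 1 / (Fintype.card E : ℝ)| ≤ ξ + α := by
  obtain ⟨hξ0, hξ1⟩ := hξ
  obtain ⟨hα0, hα1⟩ := hα
  set n : ℝ := (Fintype.card E : ℝ) with hn
  have hnpos : 0 < n := by rw [hn]; exact_mod_cast Fintype.card_pos
  set S : ℝ := ∑ e' : E, w e' with hS
  set L : ℝ := c * (1 - ξ) * (1 - α) with hLdef
  set U : ℝ := c * (1 + ξ) * (1 + α) with hUdef
  have hLpos : 0 < L := by
    rw [hLdef]; exact mul_pos (mul_pos hc (by linarith)) (by linarith)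
  have hSlb : n * L ≤ S := by
    rw [hS, hn]
    calc (Fintype.card E : ℝ) * L = ∑ _e : E, L := by
          rw [Finset.sum_const, Finset.card_univ, nsmul_eq_mul]
      _ ≤ ∑ e' : E, w e' := Finset.sum_le_sum fun e _ => (hw e).1
  have hSub : S ≤ n * U := by
    rw [hS, hn]
    calc ∑ e' : E, w e' ≤ ∑ _e : E, U := Finset.sum_le_sum fun e _ => (hw e).2
      _ = (Fintype.card E : ℝ) * U := by
          rw [Finset.sum_const, Finset.card_univ, nsmul_eq_mul]
  have hSpos : 0 < S := lt_of_lt_of_le (by positivity) hSlb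
  set a : E → ℝ := fun e => w e / S - 1 / n with ha
  have hsuma : ∑ e : E, a e = 0 := by
    rw [ha]
    simp only []
    rw [Finset.sum_sub_distrib, ← Finset.sum_div, ← hS, div_self hSpos.ne',
      Finset.sum_const, Finset.card_univ, nsmul_eq_mul, ← hn,
      mul_one_div, div_self hnpos.ne', sub_self]
  rcases le_total S (n * (c * (1 + ξ * α))) with hcase | hcase
  · -- S small: use negative parts
    have hsumneg : ∑ e : E, (-a e) = 0 := by
      rw [Finset.sum_neg_distrib, hsuma, neg_zero]
    have heq : (1/2 : ℝ) * ∑ e : E, |a e| = ∑ e : E, max (-a e) 0 := by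
      have : ∑ e : E, |a e| = ∑ e : E, |(-a e)| :=
        Finset.sum_congr rfl fun e _ => (abs_neg (a e)).symm
      rw [this]
      exact sum_abs_key (fun e => -a e) hsumneg
    have hκ0 : (0:ℝ) ≤ 1 / n - L / S := by
      rw [sub_nonneg, div_le_div_iff₀ hSpos hnpos]
      linarith
    have hterm : ∀ e : E, max (-a e) 0 ≤ 1 / n - L / S := by
      intro e
      refine max_le ?_ hκ0
      rw [ha]
      simp only [neg_sub]
      have : L / S ≤ w e / S := by
        exact div_le_div_of_nonneg_right (hw e).1 hSpos.le
      linarith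
    have hsumκ : ∑ e : E, max (-a e) 0 ≤ n * (1 / n - L / S) := by
      calc ∑ e : E, max (-a e) 0 ≤ ∑ _e : E, (1 / n - L / S) :=
            Finset.sum_le_sum fun e _ => hterm e
        _ = n * (1 / n - L / S) := by
            rw [Finset.sum_const, Finset.card_univ, nsmul_eq_mul, ← hn]
    have hfinal : n * (1 / n - L / S) ≤ ξ + α := by
      have h1 : n * (1 / n - L / S) = (S - n * L) / S := by
        field_simp
      rw [h1, div_le_iff₀ hSpos]
      rcases le_total (ξ + α) 1 with h | h
      · have h2 : S * (1 - ξ - α) ≤ n * (c * (1 + ξ * α)) * (1 - ξ - α) :=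
          mul_le_mul_of_nonneg_right hcase (by linarith)
        have h3 : (0:ℝ) ≤ n * c * (ξ * α * (ξ + α)) := by positivity
        rw [hLdef]; nlinarith
      · have h2 : S ≤ (ξ + α) * S := by nlinarith
        nlinarith [mul_pos hnpos hLpos]
    calc (1 / 2 : ℝ) * ∑ e : E, |a e| = ∑ e : E, max (-a e) 0 := heq
      _ ≤ n * (1 / n - L / S) := hsumκ
      _ ≤ ξ + α := hfinal
  · -- S large: use positive parts
    have heq : (1/2 : ℝ) * ∑ e : E, |a e| = ∑ e : E, max (a e) 0 :=
      sum_abs_key a hsuma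
    have hκ0 : (0:ℝ) ≤ U / S - 1 / n := by
      rw [sub_nonneg, div_le_div_iff₀ hnpos hSpos]
      linarith
    have hterm : ∀ e : E, max (a e) 0 ≤ U / S - 1 / n := by
      intro e
      refine max_le ?_ hκ0
      rw [ha]
      simp only []
      have : w e / S ≤ U / S := by
        exact div_le_div_of_nonneg_right (hw e).2 hSpos.le
      linarith
    have hsumκ : ∑ e : E, max (a e) 0 ≤ n * (U / S - 1 / n) := by
      calc ∑ e : E, max (a e) 0 ≤ ∑ _e : E, (U / S - 1 / n) :=
            Finset.sum_le_sum fun e _ => hterm e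
        _ = n * (U / S - 1 / n) := by
            rw [Finset.sum_const, Finset.card_univ, nsmul_eq_mul, ← hn]
    have hfinal : n * (U / S - 1 / n) ≤ ξ + α := by
      have h1 : n * (U / S - 1 / n) = (n * U - S) / S := by
        field_simp
      rw [h1, div_le_iff₀ hSpos]
      have h2 : n * (c * (1 + ξ * α)) * (1 + ξ + α) ≤ S * (1 + ξ + α) :=
        mul_le_mul_of_nonneg_right hcase (by linarith)
      have h3 : (0:ℝ) ≤ n * c * (ξ * α * (ξ + α)) := by positivity
      rw [hUdef]; nlinarith
    calc (1 / 2 : ℝ) * ∑ e : E, |a e| = ∑ e : E, max (a e) 0 := heq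
      _ ≤ n * (U / S - 1 / n) := hsumκ
      _ ≤ ξ + α := hfinal
end
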